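/- arXiv:2502.13518 — 6 statements merged into one kernel-verified Lean document; each statement's English description precedes it below -/
import Mathlib

section
/- An even permutation of {1,...,k} induces an even permutation on the set of subsets of {1,...,k} of any fixed cardinality h < k. -/
/-
An element of order 3 maps to an element of order dividing 3 in `ℤˣ`, which has exponent 2, so
every homomorphism `Perm α →* ℤˣ` kills the 3-cycles and hence the alternating group they
generate; apply this to the sign of the induced permutation of `h`-subsets.
-/

/-- The permutation induced on `h`-element subsets of `{1,...,k}` by a permutation `π` of
`{1,...,k}`, given by `S ↦ π(S)`. -/
def inducedSubsetPerm (k h : ℕ) (π : Equiv.Perm (Fin k)) :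
    Equiv.Perm {s : Finset (Fin k) // s.card = h} where
  toFun s := ⟨s.1.map π.toEmbedding, by rw [Finset.card_map]; exact s.2⟩
  invFun s := ⟨s.1.map π.symm.toEmbedding, by rw [Finset.card_map]; exact s.2⟩
  left_inv s := by
    apply Subtype.ext
    simp [Finset.map_map]
  right_inv s := by
    apply Subtype.ext
    simp [Finset.map_map]

def inducedSubsetPermHom (k h : ℕ) :
    Equiv.Perm (Fin k) →* Equiv.Perm {s : Finset (Fin k) // s.card = h} where
  toFun := inducedSubsetPerm k h
  map_one' := Equiv.ext fun _ => Subtype.ext Finset.map_refl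
  map_mul' π τ := Equiv.ext fun s =>
    Subtype.ext (Finset.map_map τ.toEmbedding π.toEmbedding s.1).symm

namespace Equiv.Perm

variable {α : Type*} [Fintype α] [DecidableEq α]

theorem IsThreeCycle.map_eq_one {σ : Perm α} (hσ : σ.IsThreeCycle) (f : Perm α →* ℤˣ) :
    f σ = 1 := by
  have hcube : f σ ^ 3 = 1 := by rw [← map_pow, ← hσ.orderOf, pow_orderOf_eq_one, map_one]
  rwa [Int.units_pow_eq_pow_mod_two, pow_one] at hcube

theorem alternatingGroup_le_ker (f : Perm α →* ℤˣ) : alternatingGroup α ≤ f.ker := by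
  rw [← closure_three_cycles_eq_alternating, Subgroup.closure_le]
  exact fun σ hσ => hσ.map_eq_one f

end Equiv.Perm

theorem even_perm_induces_even_perm_on_subsets_general (k h : ℕ)
    (π : Equiv.Perm (Fin k)) (hπ : Equiv.Perm.sign π = 1) :
    Equiv.Perm.sign (inducedSubsetPerm k h π) = 1 := by
  have hker : π ∈ (Equiv.Perm.sign.comp (inducedSubsetPermHom k h)).ker :=
    Equiv.Perm.alternatingGroup_le_ker _ (Equiv.Perm.mem_alternatingGroup.mpr hπ)
  exact MonoidHom.mem_ker.mp hker

/-- An even permutation of `{1,...,k}` induces an even permutation on the set of subsets of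
`{1,...,k}` of any fixed cardinality `h < k`. -/
theorem even_perm_induces_even_perm_on_subsets (k h : ℕ) (hh : h < k)
    (π : Equiv.Perm (Fin k)) (hπ : Equiv.Perm.sign π = 1) :
    Equiv.Perm.sign (inducedSubsetPerm k h π) = 1 :=
  even_perm_induces_even_perm_on_subsets_general k h π hπ
end

section
/- A transposition (i j) in Sym_k induces, on the set of h-element subsets of {1,...,k} (with 0 < h < k), a permutation that is a product of exactly C(k-2, h-1) disjoint transpositions; in particular, its sign is (-1)^{C(k-2,h-1)}. -/
/-- An involution whose support has `2 * m` elements has sign `(-1)^m`. -/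
lemma sign_involution_aux {α : Type*} [Fintype α] [DecidableEq α] (σ : Equiv.Perm α) (m : ℕ)
    (h2 : σ * σ = 1) (hsup : σ.support.card = 2 * m) :
    Equiv.Perm.sign σ = (-1 : ℤˣ) ^ m := by
  have hord : orderOf σ ∣ 2 := orderOf_dvd_of_pow_eq_one (by rw [pow_two]; exact h2)
  have hall : ∀ n ∈ σ.cycleType, n = 2 := fun n hn =>
    le_antisymm (Nat.le_of_dvd two_pos ((Equiv.Perm.dvd_of_mem_cycleType hn).trans hord))
      (Equiv.Perm.two_le_of_mem_cycleType hn)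
  have hrep : σ.cycleType = Multiset.replicate (Multiset.card σ.cycleType) 2 :=
    (Multiset.eq_replicate_card).2 hall
  have hsum : σ.cycleType.sum = 2 * Multiset.card σ.cycleType := by
    conv_lhs => rw [hrep]
    rw [Multiset.sum_replicate, smul_eq_mul, mul_comm]
  have hcard : Multiset.card σ.cycleType = m := by
    have := Equiv.Perm.sum_cycleType σ
    omega
  rw [Equiv.Perm.sign_of_cycleType, hcard]
  have hs2 : σ.cycleType.sum = 2 * m := by rw [hsum, hcard]
  rw [hs2, pow_add, pow_mul]
  norm_num

/-- The number of `h`-subsets containing `i` but not `j` is `C(k-2, h-1)`. -/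
lemma count_side_aux (k h : ℕ) (h0 : 0 < h) (i j : Fin k) (hij : i ≠ j) :
    (Finset.univ.filter fun s : {s : Finset (Fin k) // s.card = h} =>
        i ∈ s.1 ∧ j ∉ s.1).card = Nat.choose (k - 2) (h - 1) := by
  set A := ((Finset.univ : Finset (Fin k)).erase j).erase i with hAdef
  have hiA : i ∉ A := Finset.notMem_erase _ _
  have hjA : j ∉ A := fun hj => Finset.notMem_erase j _ (Finset.mem_of_mem_erase hj)
  have hA : A.card = k - 2 := by
    rw [hAdef, Finset.card_erase_of_mem (by simp [hij]), Finset.card_erase_of_mem (by simp)]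
    simp; omega
  rw [← hA, ← Finset.card_powersetCard]
  apply Finset.card_bij (fun s _ => s.1.erase i)
  · rintro ⟨s, hs⟩ ha
    simp only [Finset.mem_filter] at ha
    obtain ⟨-, his, hjs⟩ := ha
    rw [Finset.mem_powersetCard]
    constructor
    · intro x hx
      have hxi := Finset.ne_of_mem_erase hx
      have hxs := Finset.mem_of_mem_erase hx
      have hxj : x ≠ j := fun e => hjs (e ▸ hxs)
      simp [hAdef, hxi, hxj]
    · rw [Finset.card_erase_of_mem his, hs]
  · rintro ⟨s, hs⟩ ha ⟨t, ht⟩ hb e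
    simp only [Finset.mem_filter] at ha hb
    apply Subtype.ext
    have h' : insert i (s.erase i) = insert i (t.erase i) := by rw [e]
    rwa [Finset.insert_erase ha.2.1, Finset.insert_erase hb.2.1] at h'
  · intro t ht
    rw [Finset.mem_powersetCard] at ht
    obtain ⟨htA, htc⟩ := ht
    have hit : i ∉ t := fun h' => hiA (htA h')
    have hjt : j ∉ t := fun h' => hjA (htA h')
    refine ⟨⟨insert i t, ?_⟩, ?_, ?_⟩
    · rw [Finset.card_insert_of_notMem hit, htc]; omega
    · simp only [Finset.mem_filter, Finset.mem_univ, true_and]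
      exact ⟨Finset.mem_insert_self _ _, by simp [hij.symm, hjt]⟩
    · simp [Finset.erase_insert hit]

lemma map_swap_eq_iff_aux {k : ℕ} (i j : Fin k) (s : Finset (Fin k)) :
    s.map (Equiv.swap i j).toEmbedding = s ↔ (i ∈ s ↔ j ∈ s) := by
  constructor
  · intro hmap
    constructor
    · intro his
      have : j ∈ s.map (Equiv.swap i j).toEmbedding := by
        rw [Finset.mem_map_equiv, Equiv.symm_swap, Equiv.swap_apply_right]; exact his
      rwa [hmap] at this
    · intro hjs
      have : i ∈ s.map (Equiv.swap i j).toEmbedding := by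
        rw [Finset.mem_map_equiv, Equiv.symm_swap, Equiv.swap_apply_left]; exact hjs
      rwa [hmap] at this
  · intro hiff
    ext x
    rw [Finset.mem_map_equiv, Equiv.symm_swap]
    by_cases hx : x = i
    · subst hx; rw [Equiv.swap_apply_left]; exact hiff.symm
    by_cases hx' : x = j
    · subst hx'; rw [Equiv.swap_apply_right]; exact hiff
    · rw [Equiv.swap_apply_of_ne_of_ne hx hx']

/-- A transposition `(i j)` in `Sym_k` induces, on the set of `h`-element subsets of `{1,...,k}`
(with `0 < h < k`), a permutation that is an involution whose support consists of exactly
`2 * C(k-2, h-1)` subsets (i.e. it is a product of exactly `C(k-2, h-1)` disjoint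
transpositions); in particular its sign is `(-1)^(C(k-2, h-1))`. -/
theorem transposition_on_subsets (k h : ℕ) (h0 : 0 < h) (hh : h < k)
    (i j : Fin k) (hij : i ≠ j) :
    (inducedSubsetPerm k h (Equiv.swap i j)) * (inducedSubsetPerm k h (Equiv.swap i j)) = 1 ∧
    (Finset.univ.filter fun s : {s : Finset (Fin k) // s.card = h} =>
        inducedSubsetPerm k h (Equiv.swap i j) s ≠ s).card =
      2 * Nat.choose (k - 2) (h - 1) ∧
    Equiv.Perm.sign (inducedSubsetPerm k h (Equiv.swap i j)) =
      (-1 : ℤˣ) ^ (Nat.choose (k - 2) (h - 1)) := by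
  have hinv : (inducedSubsetPerm k h (Equiv.swap i j)) *
      (inducedSubsetPerm k h (Equiv.swap i j)) = 1 := by
    ext s x
    simp [inducedSubsetPerm, Finset.mem_map_equiv, Equiv.Perm.mul_apply,
      Equiv.swap_apply_self]
  have hcond : ∀ s : {s : Finset (Fin k) // s.card = h},
      (inducedSubsetPerm k h (Equiv.swap i j) s ≠ s) ↔
      ((i ∈ s.1 ∧ j ∉ s.1) ∨ (j ∈ s.1 ∧ i ∉ s.1)) := by
    intro s
    have : inducedSubsetPerm k h (Equiv.swap i j) s = s ↔
        s.1.map (Equiv.swap i j).toEmbedding = s.1 := by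
      rw [Subtype.ext_iff]; rfl
    rw [Ne, this, map_swap_eq_iff_aux]
    tauto
  have hcount : (Finset.univ.filter fun s : {s : Finset (Fin k) // s.card = h} =>
        inducedSubsetPerm k h (Equiv.swap i j) s ≠ s).card =
      2 * Nat.choose (k - 2) (h - 1) := by
    classical
    rw [Finset.filter_congr (fun s _ => by rw [hcond s]), Finset.filter_or,
      Finset.card_union_of_disjoint, count_side_aux k h h0 i j hij,
      count_side_aux k h h0 j i hij.symm, two_mul]
    rw [Finset.disjoint_left]
    intro s hs hs'
    simp only [Finset.mem_filter] at hs hs'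
    exact hs.2.2 hs'.2.1
  refine ⟨hinv, hcount, ?_⟩
  apply sign_involution_aux _ _ hinv
  have hsupp : (inducedSubsetPerm k h (Equiv.swap i j)).support =
      (Finset.univ.filter fun s : {s : Finset (Fin k) // s.card = h} =>
        inducedSubsetPerm k h (Equiv.swap i j) s ≠ s) := by
    ext s
    simp [Equiv.Perm.mem_support]
  rw [hsupp, hcount]
end

section
/- The subgroup of the wreath product C_2 ≀ Sym_k consisting of pairs (τ, σ) such that for every j, the component τ^j ∈ C_2 = Z/2 equals σ^{-1}(j) - j modulo 2, is well-defined (closed under the group operation and inverses) when k is even, and the projection of this subgroup to Sym_k is an isomorphism onto Sym_k. -/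
/-- The action of `Sym_k` on `Γ^k` by permuting components, as a homomorphism into `MulAut`. -/
def permMulAut (Γ : Type*) [Group Γ] (k : ℕ) :
    Equiv.Perm (Fin k) →* MulAut (Fin k → Γ) where
  toFun σ :=
    { toFun := fun γ j => γ (σ⁻¹ j)
      invFun := fun γ j => γ (σ j)
      left_inv := fun γ => by funext j; simp
      right_inv := fun γ => by funext j; simp
      map_mul' := fun γ₁ γ₂ => rfl }
  map_one' := by ext γ j; simp
  map_mul' σ₁ σ₂ := by ext γ j; simp [Equiv.Perm.mul_apply]

/-- The wreath product `Γ ≀ Sym_k`, i.e. the semidirect product `Γ^k ⋊ Sym_k` where `Sym_k`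
acts by permuting the `k` components. -/
def WreathProduct (Γ : Type*) [Group Γ] (k : ℕ) :=
  SemidirectProduct (Fin k → Γ) (Equiv.Perm (Fin k)) (permMulAut Γ k)

instance (Γ : Type*) [Group Γ] (k : ℕ) : Group (WreathProduct Γ k) :=
  inferInstanceAs (Group (SemidirectProduct _ _ _))


/-- The subset of `C_2 ≀ Sym_k` consisting of pairs `(τ, σ)` with `τ^j = σ⁻¹(j) - j (mod 2)`
for every `j`. -/
def parityGraphSet (k : ℕ) : Set (WreathProduct (Multiplicative (ZMod 2)) k) :=
  {x | ∀ j : Fin k,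
    SemidirectProduct.left x j =
      Multiplicative.ofAdd
        ((((SemidirectProduct.right x)⁻¹ j : Fin k).val : ZMod 2) - ((j.val : ℕ) : ZMod 2))}
/-!
The defining condition says that `τ` is the coboundary `j ↦ f (σ⁻¹ j) - f j` of the parity
function `f j = j mod 2` on `Fin k`. Hence the set is the conjugate, by the element `(f, 1)` of the
base group, of the standard complement `{(1, σ)} ≅ Sym_k`: it is a subgroup, and since the
conjugating element lies in the kernel of the projection to `Sym_k`, the projection stays bijective.
-/

namespace SemidirectProduct

variable {N G : Type*} [Group N] [Group G] {φ : G →* MulAut N}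

def conjRangeInr (n : N) : Subgroup (N ⋊[φ] G) :=
  (inr : G →* N ⋊[φ] G).range.map (MulAut.conj (inl n)⁻¹).toMonoidHom

theorem inv_inl_mul_inr_mul_inl (n : N) (g : G) :
    (inl n)⁻¹ * inr g * inl n = (⟨n⁻¹ * φ g n, g⟩ : N ⋊[φ] G) := by
  ext <;> simp

theorem mem_conjRangeInr {n : N} {x : N ⋊[φ] G} :
    x ∈ conjRangeInr n ↔ x.left = n⁻¹ * φ x.right n := by
  simp only [conjRangeInr, Subgroup.mem_map, MonoidHom.mem_range, exists_exists_eq_and,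
    MulEquiv.coe_toMonoidHom, MulAut.conj_apply, inv_inv, inv_inl_mul_inr_mul_inl]
  constructor
  · rintro ⟨g, rfl⟩
    rfl
  · intro hx
    exact ⟨x.right, by ext <;> simp [hx]⟩

theorem bijective_right_conjRangeInr (n : N) :
    Function.Bijective (fun x : conjRangeInr (φ := φ) n => (x : N ⋊[φ] G).right) := by
  refine ⟨fun ⟨x, hx⟩ ⟨y, hy⟩ h => ?_,
    fun g => ⟨⟨⟨n⁻¹ * φ g n, g⟩, mem_conjRangeInr.2 rfl⟩, rfl⟩⟩
  have h : x.right = y.right := h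
  rw [mem_conjRangeInr] at hx hy
  exact Subtype.ext (SemidirectProduct.ext (by rw [hx, hy, h]) h)

end SemidirectProduct

theorem parityGraphSet_eq_conjRangeInr (k : ℕ) :
    parityGraphSet k =
      (SemidirectProduct.conjRangeInr (φ := permMulAut _ k)
        (fun j : Fin k => Multiplicative.ofAdd (j.val : ZMod 2)) :
        Set ((Fin k → Multiplicative (ZMod 2)) ⋊[permMulAut _ k] Equiv.Perm (Fin k))) :=
  Set.ext fun _ => (forall_congr' fun _ => by rw [sub_eq_neg_add]; rfl).trans
    (SemidirectProduct.mem_conjRangeInr.trans funext_iff).symm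

theorem parityGraphSet_subgroup_and_proj_iso_general (k : ℕ) :
    (∀ x ∈ parityGraphSet k, ∀ y ∈ parityGraphSet k, x * y ∈ parityGraphSet k) ∧
    (∀ x ∈ parityGraphSet k, x⁻¹ ∈ parityGraphSet k) ∧
    Function.Bijective
      (fun x : parityGraphSet k => SemidirectProduct.right (x : WreathProduct (Multiplicative (ZMod 2)) k)) := by
  rw [parityGraphSet_eq_conjRangeInr]
  exact ⟨fun _ hx _ hy => mul_mem hx hy, fun _ hx => inv_mem hx,
    SemidirectProduct.bijective_right_conjRangeInr _⟩

/-- For `k` even, the set of pairs `(τ, σ) ∈ C_2 ≀ Sym_k` with `τ^j ≡ σ⁻¹(j) - j (mod 2)` is a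
subgroup (closed under multiplication and inverses), and the projection of this subgroup to
`Sym_k` is an isomorphism onto `Sym_k` (i.e. it is bijective). -/
theorem parityGraphSet_subgroup_and_proj_iso (k : ℕ) (hk : Even k) :
    (∀ x ∈ parityGraphSet k, ∀ y ∈ parityGraphSet k, x * y ∈ parityGraphSet k) ∧
    (∀ x ∈ parityGraphSet k, x⁻¹ ∈ parityGraphSet k) ∧
    Function.Bijective
      (fun x : parityGraphSet k => SemidirectProduct.right (x : WreathProduct (Multiplicative (ZMod 2)) k)) :=
  parityGraphSet_subgroup_and_proj_iso_general k
end

section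
/- Let the signed permutation (λ, π) ∈ C_2 ≀ Sym_k act on faces of the k-dimensional hypercube, where λ = 1 and π = (i j) is a transposition. Then the induced permutation σ_r of faces of rank r < k - 1 moves exactly 2^{k-r}( (1/2)·C(k-2, r) + 2·C(k-2, r-1) ) faces, namely those F with F(i) ≠ F(j), and factorizes into half as many disjoint transpositions. -/
/-- The action of a signed permutation `(ε, π) ∈ C_2 ≀ Sym_k` on the faces `{-1,0,1}^k` of the
hypercube, as a permutation. -/
def cubeEquiv {k : ℕ} (ε : Fin k → Bool) (π : Equiv.Perm (Fin k)) :
    Equiv.Perm (Fin k → SignType) where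
  toFun F := fun j => cond (ε j) (-(F (π⁻¹ j))) (F (π⁻¹ j))
  invFun F := fun i => cond (ε (π i)) (-(F (π i))) (F (π i))
  left_inv F := by funext i; simp; cases h : ε (π i) <;> simp [h]
  right_inv F := by funext j; simp; cases h : ε j <;> simp [h]

/-- The number of zero entries (the rank) of a face of the hypercube. -/
def zeroCount {k : ℕ} (F : Fin k → SignType) : ℕ :=
  (Finset.univ.filter fun i => F i = 0).card

lemma zeroCount_cubeEquiv {k : ℕ} (ε : Fin k → Bool) (π : Equiv.Perm (Fin k))
    (F : Fin k → SignType) : zeroCount (cubeEquiv ε π F) = zeroCount F := by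
  unfold zeroCount cubeEquiv
  simp only [Equiv.coe_fn_mk]
  have h1 : (Finset.univ.filter fun j => (cond (ε j) (-(F (π⁻¹ j))) (F (π⁻¹ j))) = 0)
      = Finset.univ.filter fun j => F (π⁻¹ j) = 0 := by
    ext j
    simp only [Finset.mem_filter, Finset.mem_univ, true_and]
    cases h : ε j
    · simp [h]
    · simp only [h, cond_true]
      cases hF : F (π⁻¹ j) <;> simp [hF]
  rw [h1]
  apply Finset.card_bij' (fun j _ => π⁻¹ j) (fun i _ => π i)
  · intro j hj; simp at hj ⊢; exact hj
  · intro i hi; simp at hi ⊢; exact hi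
  · intro j _; simp
  · intro i _; simp

/-- The permutation induced by `cubeEquiv ε π` on the faces of rank `r`. -/
def cubeRankPerm {k : ℕ} (ε : Fin k → Bool) (π : Equiv.Perm (Fin k)) (r : ℕ) :
    Equiv.Perm {F : Fin k → SignType // zeroCount F = r} :=
  (cubeEquiv ε π).subtypePerm (fun F => by rw [zeroCount_cubeEquiv])

/-!
The transposition `(i j)` acts by `F ↦ F ∘ (i j)`, an involution fixing exactly the faces with
`F i = F j`. To count the moved faces of rank `r`, split off the coordinates `i` and `j`: the pair
`(F i, F j)` is either `(±1, ∓1)`, leaving a face of rank `r` of `□^(k-2)`, or has exactly one zero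
(four choices), leaving a face of rank `r - 1`. Faces of rank `m` of `□^n` number
`C(n, m) · 2^(n-m)`, by the same splitting of one coordinate and Pascal's rule.
-/

open Finset

lemma comp_swap_eq_self_iff {α β : Type*} [DecidableEq α] {f : α → β} {i j : α} :
    f ∘ Equiv.swap i j = f ↔ f i = f j :=
  ⟨fun h => by simpa using (congrFun h i).symm, fun h => funext (Equiv.apply_swap_eq_self h)⟩

lemma cubeRankPerm_swap_apply_ne_iff {k r : ℕ} {i j : Fin k}
    (F : {F : Fin k → SignType // zeroCount F = r}) :
    cubeRankPerm (fun _ => false) (Equiv.swap i j) r F ≠ F ↔ F.1 i ≠ F.1 j :=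
  not_congr <| Subtype.ext_iff.trans comp_swap_eq_self_iff

lemma cubeRankPerm_swap_mul_self {k r : ℕ} (i j : Fin k) :
    cubeRankPerm (fun _ => false) (Equiv.swap i j) r *
      cubeRankPerm (fun _ => false) (Equiv.swap i j) r = 1 := by
  ext F x
  simp [cubeRankPerm, cubeEquiv]

lemma zeroCount_insertNth {n : ℕ} (p : Fin (n + 1)) (a : SignType) (F : Fin n → SignType) :
    zeroCount (Fin.insertNth p a F) = zeroCount F + if a = 0 then 1 else 0 := by
  simp only [zeroCount, card_filter, Fin.sum_univ_succAbove _ p, Fin.insertNth_apply_same,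
    Fin.insertNth_apply_succAbove]
  exact Nat.add_comm _ _

lemma card_filter_insertNth {β : Type*} [Fintype β] [DecidableEq β] {n : ℕ} (p : Fin (n + 1))
    (P : (Fin (n + 1) → β) → Prop) [DecidablePred P] :
    #{F | P F} = ∑ a, #{G : Fin n → β | P (Fin.insertNth p a G)} := by
  rw [card_filter, ← (Fin.insertNthEquiv (fun _ => β) p).sum_comp, Fintype.sum_prod_type]
  simp only [card_filter]
  rfl

lemma sum_signType {M : Type*} [AddCommMonoid M] (f : SignType → M) :
    ∑ a, f a = f 0 + f (-1) + f 1 := by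
  simp [SignType.univ_eq, add_assoc]

-- The hypothesis only constrains `e` when `m ≤ n`; otherwise both sides vanish, which absorbs
-- the truncated subtractions in the exponents below.
lemma choose_mul_two_pow_eq {n m e j : ℕ} (h : m ≤ n → e = n - m + j) :
    n.choose m * 2 ^ e = 2 ^ j * (n.choose m * 2 ^ (n - m)) := by
  rcases le_or_gt m n with hmn | hnm
  · rw [h hmn, pow_add]
    ring
  · simp [Nat.choose_eq_zero_of_lt hnm]

lemma card_filter_zeroCount_eq (n m : ℕ) :
    #{F : Fin n → SignType | zeroCount F = m} = n.choose m * 2 ^ (n - m) := by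
  induction n generalizing m with
  | zero => cases m <;> simp [zeroCount]
  | succ n ih =>
    rw [card_filter_insertNth 0, sum_signType]
    simp only [zeroCount_insertNth]
    cases m with
    | zero => simp [ih]; ring
    | succ m =>
      have hdouble := choose_mul_two_pow_eq (n := n) (m := m + 1) (e := n - m) (j := 1) (by omega)
      simp [ih, Nat.choose_succ_succ', add_mul]
      linarith

lemma card_filter_subtype {α : Type*} [Fintype α] (p q : α → Prop) [DecidablePred p]
    [DecidablePred q] : #{x : Subtype p | q x} = #{x | p x ∧ q x} := by
  rw [← Fintype.card_subtype, ← Fintype.card_subtype]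
  exact Fintype.card_congr (Equiv.subtypeSubtypeEquivSubtypeInter p q)

lemma card_filter_zeroCount_eq_and_ne {k r : ℕ} {i j : Fin k} (hij : i ≠ j) :
    #{F : Fin k → SignType | zeroCount F = r ∧ F i ≠ F j} =
      2 ^ (k - r - 1) * (k - 2).choose r +
        (if r = 0 then 0 else 2 ^ (k - r + 1) * (k - 2).choose (r - 1)) := by
  obtain ⟨n, rfl⟩ : ∃ n, k = n + 2 := ⟨k - 2, by have := i.isLt; have := j.isLt; omega⟩
  obtain ⟨j, rfl⟩ := Fin.exists_succAbove_eq hij.symm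
  rw [card_filter_insertNth i]
  simp only [zeroCount_insertNth, Fin.insertNth_apply_same, Fin.insertNth_apply_succAbove]
  simp_rw [card_filter_insertNth j]
  simp only [zeroCount_insertNth, Fin.insertNth_apply_same, sum_signType]
  cases r with
  | zero => simp [card_filter_zeroCount_eq]; ring
  | succ m =>
    have h1 := choose_mul_two_pow_eq (n := n) (m := m + 1) (e := n + 1 - m - 1) (j := 1)
      (by omega)
    have h2 := choose_mul_two_pow_eq (n := n) (m := m) (e := n + 1 - m + 1) (j := 2)
      (by omega)
    simp [card_filter_zeroCount_eq]
    linarith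

theorem hypercube_transposition_action_general (k r : ℕ) (i j : Fin k) (hij : i ≠ j) :
    (∀ F : {F : Fin k → SignType // zeroCount F = r},
        cubeRankPerm (fun _ => false) (Equiv.swap i j) r F ≠ F ↔ F.1 i ≠ F.1 j) ∧
    (cubeRankPerm (fun _ => false) (Equiv.swap i j) r) *
        (cubeRankPerm (fun _ => false) (Equiv.swap i j) r) = 1 ∧
    (Finset.univ.filter fun F : {F : Fin k → SignType // zeroCount F = r} =>
        cubeRankPerm (fun _ => false) (Equiv.swap i j) r F ≠ F).card =
      2 ^ (k - r - 1) * Nat.choose (k - 2) r +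
        (if r = 0 then 0 else 2 ^ (k - r + 1) * Nat.choose (k - 2) (r - 1)) := by
  refine ⟨cubeRankPerm_swap_apply_ne_iff, cubeRankPerm_swap_mul_self i j, ?_⟩
  rw [filter_congr fun F _ => cubeRankPerm_swap_apply_ne_iff F]
  exact (card_filter_subtype _ fun F : Fin k → SignType => F i ≠ F j).trans
    (card_filter_zeroCount_eq_and_ne hij)

/-- A coordinate transposition `(i j)` (with no sign flips) induces, on the rank-`r` faces of
the `k`-dimensional hypercube with `r < k - 1`, an involution that moves exactly the faces `F`
with `F(i) ≠ F(j)`; these number `2^(k-r)((1/2)C(k-2,r) + 2C(k-2,r-1))`, and the permutation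
factorizes into half as many disjoint transpositions. -/
theorem hypercube_transposition_action (k r : ℕ) (hr : r + 1 < k) (i j : Fin k) (hij : i ≠ j) :
    (∀ F : {F : Fin k → SignType // zeroCount F = r},
        cubeRankPerm (fun _ => false) (Equiv.swap i j) r F ≠ F ↔ F.1 i ≠ F.1 j) ∧
    (cubeRankPerm (fun _ => false) (Equiv.swap i j) r) *
        (cubeRankPerm (fun _ => false) (Equiv.swap i j) r) = 1 ∧
    (Finset.univ.filter fun F : {F : Fin k → SignType // zeroCount F = r} =>
        cubeRankPerm (fun _ => false) (Equiv.swap i j) r F ≠ F).card =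
      2 ^ (k - r - 1) * Nat.choose (k - 2) r +
        (if r = 0 then 0 else 2 ^ (k - r + 1) * Nat.choose (k - 2) (r - 1)) :=
  hypercube_transposition_action_general k r i j hij
end

section
/- If (λ, π) ∈ C_2 ≀ Sym_k is a rotation of the hypercube, i.e., ∏_{i=1}^k λ_i = sign(π), then the induced permutation σ_r of the rank-r faces of □^k is even for every r < k - 2, and sign(σ_{k-1}) = sign(σ_{k-2}). -/
open Finset Equiv Equiv.Perm

private lemma st_neg_eq_self_iff : ∀ x : SignType, -x = x ↔ x = 0 := by decide
private lemma st_neg_eq_zero_iff : ∀ x : SignType, -x = 0 ↔ x = 0 := by decide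
private lemma st_neg_neg : ∀ x : SignType, - -x = x := by decide
private lemma st_forced : ∀ x y : SignType, x ≠ y → x ≠ 0 → y ≠ 0 → y = -x := by decide
private lemma st_ne_neg_self : ∀ x : SignType, x ≠ 0 → x ≠ -x := by decide
private lemma st_one_zero : ∀ x y : SignType, x ≠ y → ¬(x ≠ 0 ∧ y ≠ 0) →
    ((if x = 0 then 1 else 0) + (if y = 0 then 1 else 0) : ℕ) = 1 := by decide

lemma involution_even_and_sign {α : Type*} [DecidableEq α] [Fintype α] :
    ∀ (n : ℕ) (f : Equiv.Perm α), f.support.card = n → f * f = 1 →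
      Even n ∧ Equiv.Perm.sign f = (-1 : ℤˣ) ^ (n / 2) := by
  intro n
  induction n using Nat.strong_induction_on with
  | _ n IH =>
    intro f hn hf
    rcases eq_or_ne f 1 with rfl | h1
    · rw [Equiv.Perm.support_one, Finset.card_empty] at hn
      subst hn
      simp
    · have hne : f.support.Nonempty := by
        rw [Finset.nonempty_iff_ne_empty, Ne, Equiv.Perm.support_eq_empty_iff]
        exact h1
      obtain ⟨x, hx⟩ := hne
      have hxmem : f x ≠ x := Equiv.Perm.mem_support.mp hx
      have hp : ∀ z, f (f z) = z := fun z => by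
        have : (f * f) z = (1 : Equiv.Perm α) z := by rw [hf]
        simpa using this
      set s : Equiv.Perm α := Equiv.swap x (f x) with hs
      have hfinv : f⁻¹ = f := inv_eq_of_mul_eq_one_right hf
      have hconj : f * s * f = s := by
        have h2 : Equiv.swap (f x) (f (f x)) = f * Equiv.swap x (f x) * f⁻¹ :=
          Equiv.swap_apply_apply f x (f x)
        rw [hp x, hfinv] at h2
        rw [hs, ← h2, Equiv.swap_comm]
      have hconj' : f * (s * f) = s := by rw [← mul_assoc]; exact hconj
      set g : Equiv.Perm α := s * f with hg
      have hgg : g * g = 1 := by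
        rw [hg, mul_assoc, hconj', Equiv.swap_mul_self]
      have hfsg : f = s * g := by rw [hg, ← mul_assoc, Equiv.swap_mul_self, one_mul]
      have hgp : ∀ z, g (g z) = z := fun z => by
        have : (g * g) z = (1 : Equiv.Perm α) z := by rw [hgg]
        simpa using this
      have hgsupp : g.support = f.support \ {x, f x} := by
        ext y
        simp only [Equiv.Perm.mem_support, Finset.mem_sdiff, Finset.mem_insert,
          Finset.mem_singleton]
        by_cases h1 : y = x
        · subst h1
          simp [hg, hs, Equiv.Perm.mul_apply, Equiv.swap_apply_right]
        · by_cases h2 : y = f x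
          · subst h2
            simp [hg, hs, Equiv.Perm.mul_apply, hp x, Equiv.swap_apply_left]
          · have hfy1 : f y ≠ x := by
              intro h
              apply h2
              rw [← h, hp y]
            have hfy2 : f y ≠ f x := fun h => h1 (f.injective h)
            simp [hg, hs, Equiv.Perm.mul_apply, Equiv.swap_apply_of_ne_of_ne hfy1 hfy2, h1, h2]
      have hxfx : x ∉ ({f x} : Finset α) := by simpa using hxmem.symm
      have hsub : ({x, f x} : Finset α) ⊆ f.support := by
        intro y hy
        rcases Finset.mem_insert.mp hy with rfl | hy
        · exact hx
        · rw [Finset.mem_singleton] at hy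
          subst hy
          rw [Equiv.Perm.mem_support, hp x]
          exact fun h => hxmem h.symm
      have hc2 : ({x, f x} : Finset α).card = 2 := by
        rw [Finset.card_insert_of_notMem hxfx, Finset.card_singleton]
      have hn2 : 2 ≤ n := by
        rw [← hn, ← hc2]
        exact Finset.card_le_card hsub
      have hcard : g.support.card = n - 2 := by
        rw [hgsupp, Finset.card_sdiff_of_subset hsub, hn, hc2]
      obtain ⟨heven, hsign⟩ := IH (n - 2) (by omega) g hcard hgg
      have hEn : Even n := by
        have := (Nat.even_sub hn2).mp heven
        simpa using this
      refine ⟨hEn, ?_⟩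
      rw [hfsg, Equiv.Perm.sign_mul, Equiv.Perm.sign_swap hxmem.symm, hsign]
      have hdiv : n / 2 = (n - 2) / 2 + 1 := by omega
      rw [hdiv, pow_succ, mul_comm]

lemma even_card_of_free_involution {α : Type*} [Fintype α] [DecidableEq α]
    (g : Equiv.Perm α) (h : g * g = 1) (hfree : ∀ x, g x ≠ x) :
    Even (Fintype.card α) := by
  have hsupp : g.support = Finset.univ :=
    Finset.eq_univ_iff_forall.mpr fun x => Equiv.Perm.mem_support.mpr (hfree x)
  obtain ⟨he, -⟩ := involution_even_and_sign g.support.card g rfl h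
  rwa [hsupp, Finset.card_univ] at he

set_option linter.unusedSectionVars false
def zcount {ι : Type*} [Fintype ι] (F : ι → SignType) : ℕ :=
  (Finset.univ.filter fun i => F i = 0).card

lemma zcount_eq_sum {ι : Type*} [Fintype ι] (F : ι → SignType) :
    zcount F = ∑ j, if F j = 0 then 1 else 0 :=
  Finset.card_filter _ _

lemma card_faces_full {ι : Type*} [Fintype ι] [DecidableEq ι] :
    Fintype.card {F : ι → SignType // zcount F = Fintype.card ι} = 1 := by
  rw [Fintype.card_eq_one_iff]
  refine ⟨⟨fun _ => 0, ?_⟩, ?_⟩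
  · simp [zcount, Finset.card_univ]
  · rintro ⟨F, hF⟩
    apply Subtype.ext
    funext j
    have huniv : Finset.univ.filter (fun i => F i = 0) = Finset.univ :=
      Finset.eq_univ_of_card _ (by rw [← hF]; rfl)
    have : j ∈ Finset.univ.filter (fun i => F i = 0) := by
      rw [huniv]; exact Finset.mem_univ j
    exact (Finset.mem_filter.mp this).2

lemma even_card_faces {ι : Type*} [Fintype ι] [DecidableEq ι] (r : ℕ) (hr : r ≠ Fintype.card ι) :
    Even (Fintype.card {F : ι → SignType // zcount F = r}) := by
  have hzneg : ∀ F : ι → SignType, zcount (fun j => -(F j)) = zcount F := by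
    intro F
    unfold zcount
    congr 1
    apply Finset.filter_congr
    intro j _
    simp [st_neg_eq_zero_iff]
  set α := {F : ι → SignType // zcount F = r}
  let g : Equiv.Perm α :=
    { toFun := fun F => ⟨fun j => -(F.1 j), by rw [hzneg]; exact F.2⟩
      invFun := fun F => ⟨fun j => -(F.1 j), by rw [hzneg]; exact F.2⟩
      left_inv := fun F => Subtype.ext (funext fun j => st_neg_neg _)
      right_inv := fun F => Subtype.ext (funext fun j => st_neg_neg _) }
  have hgg : g * g = 1 := by
    apply Equiv.ext
    intro F
    apply Subtype.ext
    funext j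
    exact st_neg_neg _
  have hfree : ∀ F : α, g F ≠ F := by
    rintro ⟨F, hF⟩ h
    have hzero : ∀ j, F j = 0 := by
      intro j
      have := congrArg (fun G => G.1 j) h
      exact (st_neg_eq_self_iff _).mp this
    apply hr
    rw [← hF]
    unfold zcount
    rw [Finset.filter_true_of_mem (fun j _ => hzero j), Finset.card_univ]
  exact even_card_of_free_involution g hgg hfree

section Ext

variable {ι : Type*} [Fintype ι] [DecidableEq ι]

def ext1 (i : ι) (x : SignType) (G : {j : ι // j ≠ i} → SignType) : ι → SignType :=
  fun j => if h : j = i then x else G ⟨j, h⟩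

lemma ext1_self (i : ι) (x : SignType) (G : {j : ι // j ≠ i} → SignType) :
    ext1 i x G i = x := by simp [ext1]

lemma ext1_other (i : ι) (x : SignType) (G : {j : ι // j ≠ i} → SignType)
    (j : {j : ι // j ≠ i}) : ext1 i x G j.1 = G j := by
  simp [ext1, j.2]

lemma zcount_ext1 (i : ι) (x : SignType) (G : {j : ι // j ≠ i} → SignType) :
    zcount (ext1 i x G) = (if x = 0 then 1 else 0) + zcount G := by
  rw [zcount_eq_sum, zcount_eq_sum]
  rw [← Finset.add_sum_erase _ _ (Finset.mem_univ i)]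
  congr 1
  · rw [ext1_self]
  · rw [Finset.sum_subtype (p := fun j => j ≠ i) (Finset.univ.erase i)
      (fun j => by simp [Finset.mem_erase]) (fun j => if ext1 i x G j = 0 then 1 else 0)]
    apply Finset.sum_congr rfl
    intro j _
    rw [ext1_other]

lemma ext1_restrict (i : ι) (F : ι → SignType) :
    ext1 i (F i) (fun j => F j.1) = F := by
  funext j
  by_cases h : j = i <;> simp [ext1, h]

lemma zcount_restrict1 (i : ι) (F : ι → SignType) :
    zcount F = (if F i = 0 then 1 else 0) + zcount (fun j : {j : ι // j ≠ i} => F j.1) := by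
  conv_lhs => rw [← ext1_restrict i F]
  rw [zcount_ext1]

def ext2 (a b : ι) (x y : SignType) (G : {j : ι // j ≠ b ∧ j ≠ a} → SignType) : ι → SignType :=
  fun j => if h : j = a then x else if h' : j = b then y else G ⟨j, h', h⟩

variable {a b : ι}

lemma ext2_a (hab : a ≠ b) (x y : SignType) (G : {j : ι // j ≠ b ∧ j ≠ a} → SignType) :
    ext2 a b x y G a = x := by simp [ext2]

lemma ext2_b (hab : a ≠ b) (x y : SignType) (G : {j : ι // j ≠ b ∧ j ≠ a} → SignType) :
    ext2 a b x y G b = y := by simp [ext2, hab.symm]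

lemma ext2_other (x y : SignType) (G : {j : ι // j ≠ b ∧ j ≠ a} → SignType)
    (j : {j : ι // j ≠ b ∧ j ≠ a}) : ext2 a b x y G j.1 = G j := by
  rcases j with ⟨j, hjb, hja⟩
  simp [ext2, hja, hjb]

lemma zcount_ext2 (hab : a ≠ b) (x y : SignType) (G : {j : ι // j ≠ b ∧ j ≠ a} → SignType) :
    zcount (ext2 a b x y G) =
      ((if x = 0 then 1 else 0) + (if y = 0 then 1 else 0)) + zcount G := by
  rw [zcount_eq_sum, zcount_eq_sum]
  rw [← Finset.add_sum_erase _ _ (Finset.mem_univ a)]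
  rw [← Finset.add_sum_erase _ _ (Finset.mem_erase.mpr ⟨hab.symm, Finset.mem_univ b⟩)]
  have hrest : (∑ j ∈ (Finset.univ.erase a).erase b, if ext2 a b x y G j = 0 then 1 else 0) =
      ∑ j : {j : ι // j ≠ b ∧ j ≠ a}, if G j = 0 then 1 else 0 := by
    rw [Finset.sum_subtype (p := fun j => j ≠ b ∧ j ≠ a) ((Finset.univ.erase a).erase b)
      (fun j => by simp [Finset.mem_erase, and_comm])
      (fun j => if ext2 a b x y G j = 0 then 1 else 0)]
    apply Finset.sum_congr rfl
    intro j _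
    rw [ext2_other]
  rw [ext2_a hab, ext2_b hab, hrest, add_assoc]

lemma ext2_restrict (hab : a ≠ b) (F : ι → SignType) :
    ext2 a b (F a) (F b) (fun j => F j.1) = F := by
  funext j
  by_cases h : j = a
  · subst h; simp [ext2]
  · by_cases h' : j = b
    · subst h'; simp [ext2, h]
    · simp [ext2, h, h']

lemma zcount_restrict2 (hab : a ≠ b) (F : ι → SignType) :
    zcount F = ((if F a = 0 then 1 else 0) + (if F b = 0 then 1 else 0)) +
      zcount (fun j : {j : ι // j ≠ b ∧ j ≠ a} => F j.1) := by
  conv_lhs => rw [← ext2_restrict hab F]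
  rw [zcount_ext2 hab]

end Ext
section Equivs

variable {ι : Type*} [Fintype ι] [DecidableEq ι]

def flipEquiv (i : ι) (r : ℕ) :
    {F : ι → SignType // zcount F = r ∧ F i ≠ 0} ≃
      {x : SignType // x ≠ 0} × {G : {j : ι // j ≠ i} → SignType // zcount G = r} where
  toFun F := (⟨F.1 i, F.2.2⟩, ⟨fun j => F.1 j.1, by
    have h := zcount_restrict1 i F.1
    rw [F.2.1, if_neg F.2.2, zero_add] at h
    exact h.symm⟩)
  invFun p := ⟨ext1 i p.1.1 p.2.1, by
    constructor
    · rw [zcount_ext1, if_neg p.1.2, zero_add, p.2.2]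
    · rw [ext1_self]; exact p.1.2⟩
  left_inv F := Subtype.ext (ext1_restrict i F.1)
  right_inv p := by
    refine Prod.ext ?_ ?_
    · exact Subtype.ext (ext1_self _ _ _)
    · exact Subtype.ext (funext fun j => ext1_other _ _ _ j)

lemma card_flip_support (i : ι) (r : ℕ) :
    Fintype.card {F : ι → SignType // zcount F = r ∧ F i ≠ 0} =
      2 * Fintype.card {G : {j : ι // j ≠ i} → SignType // zcount G = r} := by
  rw [Fintype.card_congr (flipEquiv i r), Fintype.card_prod]
  congr 1 <;> decide

variable {a b : ι}

def swapEquivA (hab : a ≠ b) (r : ℕ) :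
    {F : ι → SignType // (zcount F = r ∧ F a ≠ F b) ∧ (F a ≠ 0 ∧ F b ≠ 0)} ≃
      {x : SignType // x ≠ 0} ×
        {G : {j : ι // j ≠ b ∧ j ≠ a} → SignType // zcount G = r} where
  toFun F := (⟨F.1 a, F.2.2.1⟩, ⟨fun j => F.1 j.1, by
    have h := zcount_restrict2 hab F.1
    rw [F.2.1.1, if_neg F.2.2.1, if_neg F.2.2.2, zero_add, zero_add] at h
    exact h.symm⟩)
  invFun p := ⟨ext2 a b p.1.1 (-p.1.1) p.2.1, by
    have hx := p.1.2
    have hnx : -p.1.1 ≠ 0 := fun h => hx ((st_neg_eq_zero_iff _).mp h)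
    refine ⟨⟨?_, ?_⟩, ?_, ?_⟩
    · rw [zcount_ext2 hab, if_neg hx, if_neg hnx, zero_add, zero_add, p.2.2]
    · rw [ext2_a hab, ext2_b hab]
      exact st_ne_neg_self _ hx
    · rw [ext2_a hab]; exact hx
    · rw [ext2_b hab]; exact hnx⟩
  left_inv F := by
    apply Subtype.ext
    have hb : F.1 b = -F.1 a := st_forced _ _ F.2.1.2 F.2.2.1 F.2.2.2
    calc ext2 a b (F.1 a) (-F.1 a) (fun j => F.1 j.1)
        = ext2 a b (F.1 a) (F.1 b) (fun j => F.1 j.1) := by rw [hb]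
      _ = F.1 := ext2_restrict hab F.1
  right_inv p := by
    refine Prod.ext ?_ ?_
    · exact Subtype.ext (ext2_a hab _ _ _)
    · exact Subtype.ext (funext fun j => ext2_other _ _ _ j)

def swapEquivB (hab : a ≠ b) (r : ℕ) :
    {F : ι → SignType // (zcount F = r ∧ F a ≠ F b) ∧ ¬(F a ≠ 0 ∧ F b ≠ 0)} ≃
      {y : SignType × SignType // y.1 ≠ y.2 ∧ ¬(y.1 ≠ 0 ∧ y.2 ≠ 0)} ×
        {G : {j : ι // j ≠ b ∧ j ≠ a} → SignType // zcount G + 1 = r} where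
  toFun F := (⟨(F.1 a, F.1 b), F.2.1.2, F.2.2⟩, ⟨fun j => F.1 j.1, by
    have h := zcount_restrict2 hab F.1
    rw [F.2.1.1, st_one_zero _ _ F.2.1.2 F.2.2] at h
    omega⟩)
  invFun p := ⟨ext2 a b p.1.1.1 p.1.1.2 p.2.1, by
    refine ⟨⟨?_, ?_⟩, ?_⟩
    · rw [zcount_ext2 hab, st_one_zero _ _ p.1.2.1 p.1.2.2]
      have := p.2.2
      omega
    · rw [ext2_a hab, ext2_b hab]
      exact p.1.2.1
    · rw [ext2_a hab, ext2_b hab]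
      exact p.1.2.2⟩
  left_inv F := Subtype.ext (ext2_restrict hab F.1)
  right_inv p := by
    refine Prod.ext ?_ ?_
    · apply Subtype.ext
      refine Prod.ext ?_ ?_
      · exact ext2_a hab _ _ _
      · exact ext2_b hab _ _ _
    · exact Subtype.ext (funext fun j => ext2_other _ _ _ j)

lemma card_swap_support (hab : a ≠ b) (r : ℕ) :
    Fintype.card {F : ι → SignType // zcount F = r ∧ F a ≠ F b} =
      2 * Fintype.card {G : {j : ι // j ≠ b ∧ j ≠ a} → SignType // zcount G = r} +
      4 * Fintype.card {G : {j : ι // j ≠ b ∧ j ≠ a} → SignType // zcount G + 1 = r} := by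
  have hsplit : Fintype.card {F : ι → SignType // zcount F = r ∧ F a ≠ F b} =
      Fintype.card {F : ι → SignType // (zcount F = r ∧ F a ≠ F b) ∧ (F a ≠ 0 ∧ F b ≠ 0)} +
      Fintype.card {F : ι → SignType // (zcount F = r ∧ F a ≠ F b) ∧ ¬(F a ≠ 0 ∧ F b ≠ 0)} := by
    rw [← Fintype.card_sum]
    apply Fintype.card_congr
    calc {F : ι → SignType // zcount F = r ∧ F a ≠ F b}
        ≃ {F : {F : ι → SignType // zcount F = r ∧ F a ≠ F b} // (F.1 a ≠ 0 ∧ F.1 b ≠ 0)} ⊕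
          {F : {F : ι → SignType // zcount F = r ∧ F a ≠ F b} // ¬(F.1 a ≠ 0 ∧ F.1 b ≠ 0)} :=
          (Equiv.sumCompl _).symm
      _ ≃ _ := Equiv.sumCongr
          (Equiv.subtypeSubtypeEquivSubtypeInter
            (fun F : ι → SignType => zcount F = r ∧ F a ≠ F b)
            (fun F => F a ≠ 0 ∧ F b ≠ 0))
          (Equiv.subtypeSubtypeEquivSubtypeInter
            (fun F : ι → SignType => zcount F = r ∧ F a ≠ F b)
            (fun F => ¬(F a ≠ 0 ∧ F b ≠ 0)))
  rw [hsplit]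
  congr 1
  · rw [Fintype.card_congr (swapEquivA hab r), Fintype.card_prod]
    congr 1 <;> decide
  · rw [Fintype.card_congr (swapEquivB hab r), Fintype.card_prod]
    congr 1 <;> decide

lemma card_ne_subtype (i : ι) :
    Fintype.card {j : ι // j ≠ i} = Fintype.card ι - 1 := by
  rw [Fintype.card_subtype]
  rw [Finset.filter_ne' Finset.univ i, Finset.card_erase_of_mem (Finset.mem_univ i),
    Finset.card_univ]

lemma card_ne2_subtype (hab : a ≠ b) :
    Fintype.card {j : ι // j ≠ b ∧ j ≠ a} = Fintype.card ι - 2 := by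
  rw [Fintype.card_subtype]
  have : Finset.univ.filter (fun j : ι => j ≠ b ∧ j ≠ a) = (Finset.univ.erase a).erase b := by
    ext j
    simp [Finset.mem_erase, and_comm]
  rw [this, Finset.card_erase_of_mem (Finset.mem_erase.mpr ⟨hab.symm, Finset.mem_univ b⟩),
    Finset.card_erase_of_mem (Finset.mem_univ a), Finset.card_univ]
  omega

end Equivs
lemma cubeEquiv_apply_def {k : ℕ} (ε : Fin k → Bool) (π : Equiv.Perm (Fin k))
    (F : Fin k → SignType) (j : Fin k) :
    cubeEquiv ε π F j = cond (ε j) (-(F (π⁻¹ j))) (F (π⁻¹ j)) := rfl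

lemma cubeEquiv_one_apply {k : ℕ} (ε : Fin k → Bool) (F : Fin k → SignType) (j : Fin k) :
    cubeEquiv ε 1 F j = cond (ε j) (-(F j)) (F j) := rfl

lemma cubeEquiv_eps_mul {k : ℕ} (ε ε' : Fin k → Bool) :
    cubeEquiv ε 1 * cubeEquiv ε' 1 = cubeEquiv (fun i => xor (ε i) (ε' i)) 1 := by
  apply Equiv.ext
  intro F
  funext j
  show cubeEquiv ε 1 (cubeEquiv ε' 1 F) j = _
  rw [cubeEquiv_one_apply, cubeEquiv_one_apply, cubeEquiv_one_apply]
  cases h : ε j <;> cases h' : ε' j <;> simp [st_neg_neg]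

lemma cubeEquiv_pi_mul {k : ℕ} (σ ρ : Equiv.Perm (Fin k)) :
    cubeEquiv (fun _ => false) (σ * ρ) =
      cubeEquiv (fun _ => false) σ * cubeEquiv (fun _ => false) ρ := by
  apply Equiv.ext
  intro F
  funext j
  show cubeEquiv (fun _ => false) (σ * ρ) F j =
    cubeEquiv (fun _ => false) σ (cubeEquiv (fun _ => false) ρ F) j
  rw [cubeEquiv_apply_def, cubeEquiv_apply_def, cubeEquiv_apply_def]
  simp [mul_inv_rev, Equiv.Perm.mul_apply]

lemma cubeEquiv_decomp {k : ℕ} (ε : Fin k → Bool) (π : Equiv.Perm (Fin k)) :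
    cubeEquiv ε π = cubeEquiv ε 1 * cubeEquiv (fun _ => false) π := by
  apply Equiv.ext
  intro F
  funext j
  show cubeEquiv ε π F j = cubeEquiv ε 1 (cubeEquiv (fun _ => false) π F) j
  rw [cubeEquiv_apply_def, cubeEquiv_one_apply, cubeEquiv_apply_def]
  rfl

lemma cubeEquiv_ff_one {k : ℕ} : cubeEquiv (fun _ : Fin k => false) 1 = 1 := by
  apply Equiv.ext
  intro F
  funext j
  rw [cubeEquiv_one_apply]
  rfl

lemma cubeRankPerm_mul {k : ℕ} {ε₁ ε₂ ε₃ : Fin k → Bool} {π₁ π₂ π₃ : Equiv.Perm (Fin k)}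
    (h : cubeEquiv ε₃ π₃ = cubeEquiv ε₁ π₁ * cubeEquiv ε₂ π₂) (r : ℕ) :
    cubeRankPerm ε₃ π₃ r = cubeRankPerm ε₁ π₁ r * cubeRankPerm ε₂ π₂ r := by
  apply Equiv.ext
  intro F
  apply Subtype.ext
  show cubeEquiv ε₃ π₃ F.1 = cubeEquiv ε₁ π₁ (cubeEquiv ε₂ π₂ F.1)
  rw [h, Equiv.Perm.mul_apply]

lemma cubeRankPerm_one {k : ℕ} (r : ℕ) : cubeRankPerm (fun _ : Fin k => false) 1 r = 1 := by
  apply Equiv.ext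
  intro F
  apply Subtype.ext
  show cubeEquiv (fun _ : Fin k => false) 1 F.1 = F.1
  rw [cubeEquiv_ff_one]
  rfl

lemma support_card_eq {α : Type*} [Fintype α] [DecidableEq α] (f : Equiv.Perm α) :
    f.support.card = Fintype.card {x // f x ≠ x} := by
  have h : f.support = Finset.univ.filter (fun x => f x ≠ x) := by
    ext x
    simp [Equiv.Perm.mem_support]
  rw [h, Fintype.card_subtype]

lemma sign_cubeRankPerm_flip {k : ℕ} (i : Fin k) (r : ℕ) :
    Equiv.Perm.sign (cubeRankPerm (fun j => decide (j = i)) 1 r) =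
      if r = k - 1 then -1 else 1 := by
  set ε : Fin k → Bool := fun j => decide (j = i) with hε
  set f := cubeRankPerm ε 1 r with hf
  have hinv : f * f = 1 := by
    have hx : (fun j => xor (ε j) (ε j)) = (fun _ : Fin k => false) := by
      funext j; simp
    calc f * f = cubeRankPerm (fun j => xor (ε j) (ε j)) 1 r :=
          (cubeRankPerm_mul (cubeEquiv_eps_mul ε ε).symm r).symm
      _ = 1 := by rw [hx, cubeRankPerm_one]
  have hmoved : ∀ F : {F : Fin k → SignType // zeroCount F = r}, f F ≠ F ↔ F.1 i ≠ 0 := by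
    intro F
    rw [Ne, Ne]
    apply not_congr
    rw [Subtype.ext_iff]
    show cubeEquiv ε 1 F.1 = F.1 ↔ F.1 i = 0
    constructor
    · intro h
      have h1 := congrFun h i
      rw [cubeEquiv_one_apply] at h1
      have h2 : -(F.1 i) = F.1 i := by simpa [hε] using h1
      exact (st_neg_eq_self_iff _).mp h2
    · intro h
      funext j
      rw [cubeEquiv_one_apply]
      by_cases hj : j = i
      · subst hj
        simp [hε, h, show -(0 : SignType) = 0 from rfl]
      · simp [hε, hj]
  have hcard : f.support.card =
      2 * Fintype.card {G : {j : Fin k // j ≠ i} → SignType // zcount G = r} := by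
    rw [support_card_eq, ← card_flip_support i r]
    apply Fintype.card_congr
    calc {F // f F ≠ F}
        ≃ {F : {F : Fin k → SignType // zeroCount F = r} // F.1 i ≠ 0} :=
          Equiv.subtypeEquivRight hmoved
      _ ≃ {F : Fin k → SignType // zeroCount F = r ∧ F i ≠ 0} :=
          Equiv.subtypeSubtypeEquivSubtypeInter
            (fun F : Fin k → SignType => zeroCount F = r) (fun F => F i ≠ 0)
      _ ≃ {F : Fin k → SignType // zcount F = r ∧ F i ≠ 0} :=
          Equiv.subtypeEquivRight (fun F => Iff.rfl)
  obtain ⟨-, hsign⟩ := involution_even_and_sign f.support.card f rfl hinv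
  rw [hsign, hcard, Nat.mul_div_cancel_left _ (by norm_num : 0 < 2)]
  have hcsub : Fintype.card {j : Fin k // j ≠ i} = k - 1 := by
    rw [card_ne_subtype, Fintype.card_fin]
  by_cases hr : r = k - 1
  · rw [if_pos hr]
    have hcard1 : Fintype.card {G : {j : Fin k // j ≠ i} → SignType // zcount G = r} = 1 := by
      rw [hr, ← hcsub]
      exact card_faces_full
    rw [hcard1, pow_one]
  · rw [if_neg hr]
    exact Even.neg_one_pow (even_card_faces r (by rw [hcsub]; exact hr))

lemma sign_cubeRankPerm_swap {k : ℕ} {a b : Fin k} (hab : a ≠ b) (r : ℕ) :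
    Equiv.Perm.sign (cubeRankPerm (fun _ => false) (Equiv.swap a b) r) =
      if r = k - 2 then -1 else 1 := by
  set f := cubeRankPerm (fun _ : Fin k => false) (Equiv.swap a b) r with hf
  have hinv : f * f = 1 := by
    calc f * f = cubeRankPerm (fun _ : Fin k => false) (Equiv.swap a b * Equiv.swap a b) r :=
          (cubeRankPerm_mul (cubeEquiv_pi_mul _ _) r).symm
      _ = 1 := by rw [Equiv.swap_mul_self, cubeRankPerm_one]
  have happly : ∀ (F : Fin k → SignType) (j : Fin k),
      cubeEquiv (fun _ => false) (Equiv.swap a b) F j = F (Equiv.swap a b j) := by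
    intro F j
    rw [cubeEquiv_apply_def, Equiv.swap_inv]
    rfl
  have hmoved : ∀ F : {F : Fin k → SignType // zeroCount F = r},
      f F ≠ F ↔ F.1 a ≠ F.1 b := by
    intro F
    rw [Ne, Ne]
    apply not_congr
    rw [Subtype.ext_iff]
    show cubeEquiv (fun _ => false) (Equiv.swap a b) F.1 = F.1 ↔ F.1 a = F.1 b
    constructor
    · intro h
      have h1 := congrFun h a
      rw [happly, Equiv.swap_apply_left] at h1
      exact h1.symm
    · intro h
      funext j
      rw [happly]
      rcases Equiv.swap_apply_def a b j with _
      by_cases hj : j = a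
      · subst hj; rw [Equiv.swap_apply_left]; exact h.symm
      · by_cases hj' : j = b
        · subst hj'; rw [Equiv.swap_apply_right]; exact h
        · rw [Equiv.swap_apply_of_ne_of_ne hj hj']
  have hcard : f.support.card =
      2 * Fintype.card {G : {j : Fin k // j ≠ b ∧ j ≠ a} → SignType // zcount G = r} +
      4 * Fintype.card {G : {j : Fin k // j ≠ b ∧ j ≠ a} → SignType // zcount G + 1 = r} := by
    rw [support_card_eq, ← card_swap_support hab r]
    apply Fintype.card_congr
    calc {F // f F ≠ F}
        ≃ {F : {F : Fin k → SignType // zeroCount F = r} // F.1 a ≠ F.1 b} :=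
          Equiv.subtypeEquivRight hmoved
      _ ≃ {F : Fin k → SignType // zeroCount F = r ∧ F a ≠ F b} :=
          Equiv.subtypeSubtypeEquivSubtypeInter
            (fun F : Fin k → SignType => zeroCount F = r) (fun F => F a ≠ F b)
      _ ≃ {F : Fin k → SignType // zcount F = r ∧ F a ≠ F b} :=
          Equiv.subtypeEquivRight (fun F => Iff.rfl)
  obtain ⟨-, hsign⟩ := involution_even_and_sign f.support.card f rfl hinv
  set A := Fintype.card {G : {j : Fin k // j ≠ b ∧ j ≠ a} → SignType // zcount G = r} with hA
  set B := Fintype.card {G : {j : Fin k // j ≠ b ∧ j ≠ a} → SignType // zcount G + 1 = r} with hB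
  have hdiv : (2 * A + 4 * B) / 2 = A + 2 * B := by omega
  rw [hsign, hcard, hdiv]
  have hcsub : Fintype.card {j : Fin k // j ≠ b ∧ j ≠ a} = k - 2 := by
    rw [card_ne2_subtype hab, Fintype.card_fin]
  by_cases hr : r = k - 2
  · rw [if_pos hr]
    have hA1 : A = 1 := by
      rw [hA, hr, ← hcsub]
      exact card_faces_full
    rw [hA1]
    exact Odd.neg_one_pow ⟨B, by omega⟩
  · rw [if_neg hr]
    have hAe : Even A := even_card_faces r (by rw [hcsub]; exact hr)
    exact Even.neg_one_pow (hAe.add (even_two_mul B))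

lemma sign_cubeRankPerm_pi {k : ℕ} (π : Equiv.Perm (Fin k)) (r : ℕ) :
    Equiv.Perm.sign (cubeRankPerm (fun _ => false) π r) =
      if r = k - 2 then Equiv.Perm.sign π else 1 := by
  refine Equiv.Perm.swap_induction_on π ?_ ?_
  · rw [cubeRankPerm_one]
    simp
  · intro g x y hxy IH
    rw [cubeRankPerm_mul (cubeEquiv_pi_mul _ _) r, Equiv.Perm.sign_mul,
      sign_cubeRankPerm_swap hxy, IH, Equiv.Perm.sign_mul, Equiv.Perm.sign_swap hxy]
    by_cases hr : r = k - 2 <;> simp [hr]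

lemma sign_cubeRankPerm_eps_aux {k : ℕ} (r : ℕ) (s : Finset (Fin k)) :
    Equiv.Perm.sign (cubeRankPerm (fun i => decide (i ∈ s)) 1 r) =
      (if r = k - 1 then (-1 : ℤˣ) else 1) ^ s.card := by
  induction s using Finset.induction_on with
  | empty =>
    have hfun : (fun i : Fin k => decide (i ∈ (∅ : Finset (Fin k)))) = fun _ => false := by
      funext i; simp
    rw [hfun, cubeRankPerm_one]
    simp
  | @insert a s ha IH =>
    have hfun : (fun i : Fin k => decide (i ∈ insert a s)) =
        fun i => xor (decide (i = a)) (decide (i ∈ s)) := by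
      funext i
      by_cases h : i = a <;> simp [h, ha]
    rw [hfun,
      cubeRankPerm_mul ((cubeEquiv_eps_mul (fun i => decide (i = a))
        (fun i => decide (i ∈ s))).symm) r,
      Equiv.Perm.sign_mul, sign_cubeRankPerm_flip, IH,
      Finset.card_insert_of_notMem ha, pow_succ]
    exact mul_comm _ _

lemma sign_cubeRankPerm_eps {k : ℕ} (ε : Fin k → Bool) (r : ℕ) :
    Equiv.Perm.sign (cubeRankPerm ε 1 r) =
      (if r = k - 1 then (-1 : ℤˣ) else 1) ^
        (Finset.univ.filter fun i => ε i = true).card := by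
  have hε : ε = fun i => decide (i ∈ Finset.univ.filter fun i => ε i = true) := by
    funext i
    by_cases h : ε i <;> simp [h]
  conv_lhs => rw [hε]
  exact sign_cubeRankPerm_eps_aux r _

/-- If `(ε, π) ∈ C_2 ≀ Sym_k` is a rotation of the hypercube, i.e. the product of the sign
flips equals the sign of `π`, then the induced permutation of the rank-`r` faces of `□^k` is
even for every `r < k - 2`, and the permutations induced on ranks `k-1` and `k-2` have the
same sign. -/
theorem hypercube_rotation_induced_signs (k : ℕ) (hk : 2 ≤ k)
    (ε : Fin k → Bool) (π : Equiv.Perm (Fin k))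
    (hrot : Equiv.Perm.sign π =
      (-1 : ℤˣ) ^ (Finset.univ.filter fun i => ε i = true).card) :
    (∀ r, r < k - 2 → Equiv.Perm.sign (cubeRankPerm ε π r) = 1) ∧
    Equiv.Perm.sign (cubeRankPerm ε π (k - 1)) =
      Equiv.Perm.sign (cubeRankPerm ε π (k - 2)) := by
  have key : ∀ r : ℕ, Equiv.Perm.sign (cubeRankPerm ε π r) =
      (if r = k - 1 then (-1 : ℤˣ) else 1) ^
        (Finset.univ.filter fun i => ε i = true).card *
      (if r = k - 2 then Equiv.Perm.sign π else 1) := by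
    intro r
    rw [cubeRankPerm_mul (cubeEquiv_decomp ε π) r, Equiv.Perm.sign_mul,
      sign_cubeRankPerm_eps, sign_cubeRankPerm_pi]
  constructor
  · intro r hr
    rw [key r, if_neg (by omega), if_neg (by omega), one_pow, mul_one]
  · rw [key (k - 1), key (k - 2), if_pos rfl, if_neg (by omega), if_neg (by omega),
      if_pos rfl, one_pow, one_mul, mul_one, hrot]
end

section
/- The order of the group of elements (τ_i, σ_i)_{0 ≤ i ≤ n-2} of (Alt_n ≀ Sym_{n+1}) × ∏_{1 ≤ i < n-1} (Sym_{n-i} ≀ Sym_{n_i}) with n_i = C(n+1, i+1), subject to: ∏_j τ_0^j ∈ Alt_n', ∏_j τ_i^j ∈ Alt_{n-i} for i > 0, and σ_i ∈ Alt_{n_i} for all i, equals (1 / (c_n · 2^{3n-2})) · ∏_{0 ≤ i < n-1} (n-i)!^{C(n+1,i+1)} · C(n+1,i+1)!, where c_n = 3 for n = 3, 4 and c_n = 1 for n ≥ 5. -/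
/-!
The constraints act on independent factors. A `k`-tuple in a group `G` whose product must lie in
a subgroup `H` is free in its first `k - 1` entries, and the product then ranges over `H`, so
there are `|G|^k / [G : H]` of them. The relevant indices are `[Sym_m : Alt_m] = 2` and
`[Alt_n : Alt_n'] = c_n`: `Alt_3` is abelian of order 3, `Alt_4'` is the Klein four group, and
`Alt_n` is perfect for `n ≥ 5`. Counting the factors of 2, `τ_0` contributes `n + 1`, `σ_0` one,
and each of the `n - 2` remaining layers two, which gives `2^(3n-2)`.
-/

section TupleProduct

variable {G : Type*} [Group G]

theorem List.prod_ofFn_eq_prod_init_mul {k : ℕ} (τ : Fin (k + 1) → G) :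
    (List.ofFn τ).prod = (List.ofFn (Fin.init τ)).prod * τ (Fin.last k) := by
  rw [List.ofFn_succ', List.prod_concat]
  rfl

def Subgroup.tupleProdMemEquiv (H : Subgroup G) (k : ℕ) :
    {τ : Fin (k + 1) → G // (List.ofFn τ).prod ∈ H} ≃ (Fin k → G) × H where
  toFun τ := (Fin.init τ.1, ⟨(List.ofFn τ.1).prod, τ.2⟩)
  invFun p := ⟨Fin.snoc p.1 ((List.ofFn p.1).prod⁻¹ * p.2), by
    rw [List.prod_ofFn_eq_prod_init_mul, Fin.init_snoc, Fin.snoc_last, mul_inv_cancel_left]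
    exact p.2.2⟩
  left_inv τ := by
    ext1
    simp only [List.prod_ofFn_eq_prod_init_mul τ.1, inv_mul_cancel_left, Fin.snoc_init_self]
  right_inv p := by
    refine Prod.ext (Fin.init_snoc (α := fun _ => G) _ _) (Subtype.ext ?_)
    dsimp only
    rw [List.prod_ofFn_eq_prod_init_mul, Fin.init_snoc, Fin.snoc_last, mul_inv_cancel_left]

theorem Subgroup.card_tuple_prod_mem_mul_index (H : Subgroup G) {k : ℕ} (hk : k ≠ 0) :
    Nat.card {τ : Fin k → G // (List.ofFn τ).prod ∈ H} * H.index = Nat.card G ^ k := by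
  obtain ⟨k, rfl⟩ := Nat.exists_eq_succ_of_ne_zero hk
  rw [Nat.card_congr (H.tupleProdMemEquiv k), Nat.card_prod, Nat.card_fun, Nat.card_fin,
    mul_assoc, Subgroup.card_mul_index, pow_succ]

end TupleProduct

section Alternating

open Equiv

variable {α : Type*} [DecidableEq α] [Fintype α]

theorem card_tuple_prod_mem_alternatingGroup_mul_two [Nontrivial α] {k : ℕ} (hk : k ≠ 0) :
    Nat.card {τ : Fin k → Perm α // (List.ofFn τ).prod ∈ alternatingGroup α} * 2 =
      (Nat.card α).factorial ^ k := by
  rw [← alternatingGroup.index_eq_two (α := α), Subgroup.card_tuple_prod_mem_mul_index _ hk,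
    Nat.card_perm]

theorem card_alternatingGroup_mul_two [Nontrivial α] :
    Nat.card (alternatingGroup α) * 2 = (Nat.card α).factorial := by
  rw [mul_comm, two_mul_nat_card_alternatingGroup, Nat.card_perm]

theorem index_commutator_alternatingGroup (hα : 3 ≤ Nat.card α) :
    (commutator (alternatingGroup α)).index = if Nat.card α ≤ 4 then 3 else 1 := by
  have : Nontrivial α := Finite.one_lt_card_iff_nontrivial.mp (by omega)
  obtain h3 | h4 | h5 : Nat.card α = 3 ∨ Nat.card α = 4 ∨ 5 ≤ Nat.card α := by omega
  · have hA : Nat.card (alternatingGroup α) = 3 := by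
      have := card_alternatingGroup_mul_two (α := α)
      rw [h3, show Nat.factorial 3 = 6 from rfl] at this
      omega
    have := isCyclic_of_prime_card hA
    rw [(commutator_eq_bot_iff (G := alternatingGroup α)).mpr inferInstance, Subgroup.index_bot,
      hA, if_pos (by omega)]
  · have := Subgroup.card_mul_index (alternatingGroup.kleinFour α)
    rw [alternatingGroup.kleinFour_card_of_card_eq_four h4,
      alternatingGroup.card_of_card_eq_four h4] at this
    rw [← alternatingGroup.kleinFour_eq_commutator h4, if_pos (by omega)]
    omega
  · rw [commutator_alternatingGroup_eq_top h5, Subgroup.index_top, if_neg (by omega)]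

theorem card_tuple_prod_mem_commutator_alternatingGroup (hα : 3 ≤ Nat.card α) {k : ℕ}
    (hk : k ≠ 0) :
    Nat.card {τ : Fin k → alternatingGroup α //
          (List.ofFn τ).prod ∈ commutator (alternatingGroup α)} *
        (if Nat.card α ≤ 4 then 3 else 1) * 2 ^ k = (Nat.card α).factorial ^ k := by
  have : Nontrivial α := Finite.one_lt_card_iff_nontrivial.mp (by omega)
  rw [← index_commutator_alternatingGroup hα, Subgroup.card_tuple_prod_mem_mul_index _ hk,
    ← mul_pow, card_alternatingGroup_mul_two]

end Alternating

theorem Nat.card_subtype_prod_pi {A B ι : Type*} [Fintype ι] {C D : ι → Type*}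
    (p : A → Prop) (q : B → Prop) (r : ∀ i, C i → Prop) (s : ∀ i, D i → Prop) :
    Nat.card {x : (A × B) × ∀ i, C i × D i //
        p x.1.1 ∧ q x.1.2 ∧ ∀ i, r i (x.2 i).1 ∧ s i (x.2 i).2} =
      Nat.card {a // p a} * Nat.card {b // q b} *
        ∏ i, Nat.card {c // r i c} * Nat.card {d // s i d} := by
  simp only [← and_assoc]
  rw [Nat.card_congr (Equiv.subtypeProdEquivProd (p := fun a : A × B => p a.1 ∧ q a.2)
      (q := fun f : ∀ i, C i × D i => ∀ i, r i (f i).1 ∧ s i (f i).2)),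
    Nat.card_prod, Nat.card_congr (Equiv.subtypeProdEquivProd (p := p) (q := q)), Nat.card_prod,
    Nat.card_congr (Equiv.subtypePiEquivPi (p := fun i (c : C i × D i) => r i c.1 ∧ s i c.2)),
    Nat.card_pi]
  simp only [Nat.card_congr (Equiv.subtypeProdEquivProd (p := r _) (q := s _)), Nat.card_prod]

theorem Nat.two_le_choose {m k : ℕ} (hk : 0 < k) (hkm : k < m) : 2 ≤ m.choose k := by
  have := Nat.choose_le_choose k (Nat.succ_le_of_lt hkm)
  rw [Nat.choose_succ_self_right] at this
  omega

theorem card_even_wreath_mul_four {m k : ℕ} (hm : 2 ≤ m) (hk : 2 ≤ k) :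
    Nat.card {t : Fin k → Equiv.Perm (Fin m) // (List.ofFn t).prod ∈ alternatingGroup (Fin m)} *
        Nat.card (alternatingGroup (Fin k)) * 4 = m.factorial ^ k * k.factorial := by
  have := Fin.nontrivial_iff_two_le.mpr hm
  have := Fin.nontrivial_iff_two_le.mpr hk
  have hτ := card_tuple_prod_mem_alternatingGroup_mul_two (α := Fin m) (k := k) (by omega)
  have hσ := card_alternatingGroup_mul_two (α := Fin k)
  rw [Nat.card_fin] at hτ hσ
  rw [← hτ, ← hσ]
  ring

/-- The order of the Rubik's group of the `n`-dimensional simplex: the group of tuples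
`(τ_i, σ_i)_{0 ≤ i ≤ n-2}` in `(Alt_n ≀ Sym_{n+1}) × ∏_{1 ≤ i < n-1} Sym_{n-i} ≀ Sym_{n_i}`
(with `n_i = C(n+1, i+1)`) satisfying `∏_j τ_0^j ∈ Alt_n'`, `∏_j τ_i^j ∈ Alt_{n-i}` for
`i > 0`, and `σ_i ∈ Alt_{n_i}` for all `i`, has cardinality
`(1 / (c_n · 2^(3n-2))) · ∏_{0 ≤ i < n-1} (n-i)!^{C(n+1,i+1)} · C(n+1,i+1)!`,
where `c_n = 3` for `n = 3, 4` and `c_n = 1` for `n ≥ 5`. -/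
theorem card_rubik_simplex_group (n : ℕ) (hn : 3 ≤ n) :
    Nat.card {x :
        ((Fin (n + 1) → alternatingGroup (Fin n)) × Equiv.Perm (Fin (n + 1))) ×
        (∀ i : Fin (n - 2),
          (Fin ((n + 1).choose (i.1 + 2)) → Equiv.Perm (Fin (n - (i.1 + 1)))) ×
            Equiv.Perm (Fin ((n + 1).choose (i.1 + 2)))) //
        (List.ofFn x.1.1).prod ∈ commutator (alternatingGroup (Fin n)) ∧
        x.1.2 ∈ alternatingGroup (Fin (n + 1)) ∧
        ∀ i : Fin (n - 2),
          (List.ofFn (x.2 i).1).prod ∈ alternatingGroup (Fin (n - (i.1 + 1))) ∧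
          (x.2 i).2 ∈ alternatingGroup (Fin ((n + 1).choose (i.1 + 2)))} *
      ((if n ≤ 4 then 3 else 1) * 2 ^ (3 * n - 2)) =
    ∏ i ∈ Finset.range (n - 1),
      ((n - i).factorial ^ ((n + 1).choose (i + 1)) * ((n + 1).choose (i + 1)).factorial) := by
  have := Fin.nontrivial_iff_two_le.mpr (show 2 ≤ n + 1 by omega)
  have hτ₀ := card_tuple_prod_mem_commutator_alternatingGroup (α := Fin n)
    (by simpa using hn) (k := n + 1) (by omega)
  have hσ₀ := card_alternatingGroup_mul_two (α := Fin (n + 1))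
  simp only [Nat.card_fin] at hτ₀ hσ₀
  have hpow : 2 ^ (3 * n - 2) = 2 ^ (n + 1) * 2 * 4 ^ (n - 2) := by
    rw [show 4 = 2 ^ 2 from rfl, ← pow_mul, ← pow_succ, ← pow_add]
    congr 1
    omega
  -- The predicates are applied to projections, so they cannot be found by unification.
  rw [Nat.card_subtype_prod_pi (fun τ => (List.ofFn τ).prod ∈ commutator _)
    (· ∈ alternatingGroup _)
    (C := fun i : Fin (n - 2) =>
      Fin ((n + 1).choose (i.1 + 2)) → Equiv.Perm (Fin (n - (i.1 + 1))))
    (D := fun i => Equiv.Perm (Fin ((n + 1).choose (i.1 + 2))))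
    (fun _ t => (List.ofFn t).prod ∈ alternatingGroup _) (fun _ s => s ∈ alternatingGroup _)]
  rw [show n - 1 = n - 2 + 1 by omega, Finset.prod_range_succ', ← Fin.prod_univ_eq_prod_range]
  simp only [Nat.sub_zero, zero_add, Nat.choose_one_right, add_assoc, Nat.reduceAdd]
  rw [← hτ₀, ← hσ₀, hpow, ← Finset.prod_congr rfl fun (i : Fin (n - 2)) _ =>
    card_even_wreath_mul_four (m := n - (i.1 + 1)) (k := (n + 1).choose (i.1 + 2)) (by omega)
      (Nat.two_le_choose (by omega) (by omega))]
  simp only [Finset.prod_mul_distrib, Finset.prod_const, Finset.card_univ, Fintype.card_fin]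
  ring
end
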